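/- Let ω ∈ ℂ with Re ω > 0 and a > 0. Define the operator R₊(ω) on functions φ on (a,∞) by (R₊(ω)φ)(x) = (1/(2ω))(∫_a^x e^{ωξ}φ(ξ)dξ)e^{-ωx} + (1/(2ω))(∫_x^∞ e^{-ωξ}φ(ξ)dξ)e^{ωx} - (1/(2ω))(∫_a^∞ e^{-ωξ}φ(ξ)dξ)e^{2ωa}e^{-ωx}. Then R₊(ω) is a bounded operator on L²(a,∞) with ‖R₊(ω)‖ ≤ 3/(2|ω| Re ω). -/

import Mathlib

/-!
For `x > a`, `R₊(ω)` is the integral operator on `(a, ∞)` whose kernel is the Dirichlet Green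
function given by the method of images, `(e^{-ω|x-ξ|} - e^{-ω(x-a)} e^{-ω(ξ-a)}) / (2ω)`.
Each of the two pieces is bounded on `L²` by Schur's test (the `L¹`/`L^∞` interpolation of the
paper, specialised to kernel operators): the row and column integrals of `|e^{-ω|x-ξ|}|` are at
most `2 / Re ω`, those of `|e^{-ω(x-a)} e^{-ω(ξ-a)}|` at most `1 / Re ω`, whence the constant
`(2 + 1) / (2 |ω| Re ω)`.
-/

open Complex Real MeasureTheory Set

/-- The operator `R₊(ω)` from Lemma 3 of the paper, acting on functions on `(a, ∞)`. -/
noncomputable def Rplus (ω : ℂ) (a : ℝ) (φ : ℝ → ℂ) : ℝ → ℂ := fun x =>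
  (1 / (2 * ω)) * (∫ ξ in Ioc a x, Complex.exp (ω * ξ) * φ ξ) * Complex.exp (-ω * x) +
  (1 / (2 * ω)) * (∫ ξ in Ioi x, Complex.exp (-ω * ξ) * φ ξ) * Complex.exp (ω * x) -
  (1 / (2 * ω)) * (∫ ξ in Ioi a, Complex.exp (-ω * ξ) * φ ξ) *
    Complex.exp (2 * ω * a) * Complex.exp (-ω * x)

open scoped ENNReal NNReal

section SchurTest

variable {α β : Type*} [MeasurableSpace α] [MeasurableSpace β] {μ : Measure α} {ν : Measure β}

theorem ENNReal.sq_lintegral_mul_le {w g : β → ℝ≥0∞} (hw : AEMeasurable w ν)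
    (hg : AEMeasurable g ν) :
    (∫⁻ y, w y * g y ∂ν) ^ 2 ≤ (∫⁻ y, w y ∂ν) * ∫⁻ y, w y * g y ^ 2 ∂ν := by
  have hsplit : ∀ y, w y * g y = w y ^ (1 / 2 : ℝ) * (w y * g y ^ 2) ^ (1 / 2 : ℝ) := by
    intro y
    rw [ENNReal.mul_rpow_of_nonneg _ _ (by norm_num), ← mul_assoc,
      ← ENNReal.rpow_add_of_nonneg _ _ (by norm_num) (by norm_num), ← ENNReal.rpow_natCast,
      ← ENNReal.rpow_mul]
    norm_num
  have hHolder := lintegral_mul_norm_pow_le hw (hw.mul (hg.pow_const 2))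
    (p := 1 / 2) (q := 1 / 2) (by norm_num) (by norm_num) (by norm_num)
  calc (∫⁻ y, w y * g y ∂ν) ^ 2
      ≤ ((∫⁻ y, w y ∂ν) ^ (1 / 2 : ℝ) * (∫⁻ y, w y * g y ^ 2 ∂ν) ^ (1 / 2 : ℝ)) ^ 2 := by
        rw [lintegral_congr hsplit]
        gcongr
        exact hHolder
    _ = (∫⁻ y, w y ∂ν) * ∫⁻ y, w y * g y ^ 2 ∂ν := by
        rw [mul_pow, ← ENNReal.rpow_natCast, ← ENNReal.rpow_natCast, ← ENNReal.rpow_mul,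
          ← ENNReal.rpow_mul]
        norm_num

theorem sq_eLpNorm_two {E : Type*} [NormedAddCommGroup E] (f : β → E) :
    eLpNorm f 2 ν ^ 2 = ∫⁻ y, ‖f y‖ₑ ^ 2 ∂ν := by
  simpa using eLpNorm_nnreal_pow_eq_lintegral (f := f) (μ := ν) (p := 2) two_ne_zero

variable [SFinite μ] [SFinite ν]

theorem lintegral_sq_lintegral_kernel_mul_le {K : α → β → ℝ≥0∞}
    (hK : AEMeasurable (Function.uncurry K) (μ.prod ν)) {g : β → ℝ≥0∞} (hg : AEMeasurable g ν)
    {C₁ C₂ : ℝ≥0∞} (hrow : ∀ᵐ x ∂μ, ∫⁻ y, K x y ∂ν ≤ C₁)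
    (hcol : ∀ᵐ y ∂ν, ∫⁻ x, K x y ∂μ ≤ C₂) :
    ∫⁻ x, (∫⁻ y, K x y * g y ∂ν) ^ 2 ∂μ ≤ C₁ * C₂ * ∫⁻ y, g y ^ 2 ∂ν := by
  have hKg : AEMeasurable (fun p : α × β => K p.1 p.2 * g p.2 ^ 2) (μ.prod ν) :=
    hK.mul (hg.comp_snd.pow_const 2)
  have hrows : ∀ᵐ x ∂μ, AEMeasurable (K x) ν :=
    hK.aestronglyMeasurable.prodMk_left.mono fun x hx => hx.aemeasurable
  have hcols : ∀ᵐ y ∂ν, AEMeasurable (fun x => K x y) μ :=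
    hK.prod_swap.aestronglyMeasurable.prodMk_left.mono fun y hy => hy.aemeasurable
  calc ∫⁻ x, (∫⁻ y, K x y * g y ∂ν) ^ 2 ∂μ
      ≤ ∫⁻ x, C₁ * ∫⁻ y, K x y * g y ^ 2 ∂ν ∂μ := by
        refine lintegral_mono_ae ?_
        filter_upwards [hrow, hrows] with x hx hKx
        exact (ENNReal.sq_lintegral_mul_le hKx hg).trans (by gcongr)
    _ = C₁ * ∫⁻ y, ∫⁻ x, K x y * g y ^ 2 ∂μ ∂ν := by
        rw [lintegral_const_mul'' _ hKg.lintegral_prod_right', lintegral_lintegral_swap hKg]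
    _ ≤ C₁ * ∫⁻ y, C₂ * g y ^ 2 ∂ν := by
        gcongr C₁ * ?_
        refine lintegral_mono_ae ?_
        filter_upwards [hcol, hcols] with y hy hKy
        rw [lintegral_mul_const'' _ hKy]
        gcongr
    _ = C₁ * C₂ * ∫⁻ y, g y ^ 2 ∂ν := by
        rw [lintegral_const_mul'' _ (hg.pow_const 2), mul_assoc]

end SchurTest

section KernelOperator

variable {α β 𝕜 : Type*} [MeasurableSpace α] [MeasurableSpace β] [RCLike 𝕜]

def SchurBounded (k : α → β → 𝕜) (μ : Measure α) (ν : Measure β) (C : ℝ≥0) : Prop :=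
  (∀ᵐ x ∂μ, ∫⁻ y, ‖k x y‖ₑ ∂ν ≤ C) ∧ ∀ᵐ y ∂ν, ∫⁻ x, ‖k x y‖ₑ ∂μ ≤ C

theorem schurBounded_of_comm {k : α → α → 𝕜} {μ : Measure α} {C : ℝ≥0}
    (hcomm : ∀ x y, k x y = k y x) (hrow : ∀ᵐ x ∂μ, ∫⁻ y, ‖k x y‖ₑ ∂μ ≤ C) :
    SchurBounded k μ μ C :=
  ⟨hrow, by simpa only [hcomm _ (_ : α)] using hrow⟩

variable {μ : Measure α} {ν : Measure β} [SFinite μ] [SFinite ν] {k : α → β → 𝕜} {f : β → 𝕜}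
  {C : ℝ≥0}

theorem lintegral_sq_lintegral_enorm_kernel_mul_le
    (hk : AEStronglyMeasurable (Function.uncurry k) (μ.prod ν)) (hf : MemLp f 2 ν)
    (hK : SchurBounded k μ ν C) :
    ∫⁻ x, (∫⁻ y, ‖k x y * f y‖ₑ ∂ν) ^ 2 ∂μ ≤ (C * eLpNorm f 2 ν) ^ 2 := by
  simp only [enorm_mul]
  rw [mul_pow, sq_eLpNorm_two, sq]
  exact lintegral_sq_lintegral_kernel_mul_le hk.enorm hf.1.enorm hK.1 hK.2

theorem ae_integrable_kernel_mul
    (hk : AEStronglyMeasurable (Function.uncurry k) (μ.prod ν)) (hf : MemLp f 2 ν)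
    (hK : SchurBounded k μ ν C) :
    ∀ᵐ x ∂μ, Integrable (fun y => k x y * f y) ν := by
  have hkf := hk.mul hf.1.comp_snd
  have hfin : ∫⁻ x, (∫⁻ y, ‖k x y * f y‖ₑ ∂ν) ^ 2 ∂μ ≠ ∞ :=
    (lintegral_sq_lintegral_enorm_kernel_mul_le hk hf hK).trans_lt
      (by finiteness [hf.2.ne]) |>.ne
  filter_upwards [ae_lt_top' (hkf.enorm.lintegral_prod_right'.pow_const 2) hfin,
    hkf.prodMk_left] with x hx hmeas
  exact ⟨hmeas, by simpa [HasFiniteIntegral] using hx⟩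

theorem eLpNorm_integral_kernel_mul_le
    (hk : AEStronglyMeasurable (Function.uncurry k) (μ.prod ν)) (hf : MemLp f 2 ν)
    (hK : SchurBounded k μ ν C) :
    eLpNorm (fun x => ∫ y, k x y * f y ∂ν) 2 μ ≤ C * eLpNorm f 2 ν := by
  rw [← ENNReal.pow_le_pow_left_iff two_ne_zero, sq_eLpNorm_two]
  refine le_trans ?_ (lintegral_sq_lintegral_enorm_kernel_mul_le hk hf hK)
  gcongr with x
  exact enorm_integral_le_lintegral_enorm _

theorem memLp_integral_kernel_mul
    (hk : AEStronglyMeasurable (Function.uncurry k) (μ.prod ν)) (hf : MemLp f 2 ν)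
    (hK : SchurBounded k μ ν C) :
    MemLp (fun x => ∫ y, k x y * f y ∂ν) 2 μ :=
  ⟨(hk.mul hf.1.comp_snd).integral_prod_right',
    (eLpNorm_integral_kernel_mul_le hk hf hK).trans_lt (by finiteness [hf.2.ne])⟩

end KernelOperator

theorem lintegral_exp_neg_mul_abs {σ : ℝ} (hσ : 0 < σ) :
    ∫⁻ t, ENNReal.ofReal (rexp (-σ * |t|)) = ENNReal.ofReal (2 / σ) := by
  have h : ∫ t, rexp (-σ * |t|) = 2 / σ := by
    rw [integral_comp_abs (f := fun t => rexp (-σ * t)), integral_exp_mul_Ioi (by linarith)]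
    field_simp
    simp
  rw [← h, ofReal_integral_eq_lintegral_ofReal
    (Integrable.of_integral_ne_zero (by rw [h]; positivity)) (ae_of_all _ fun t => (exp_pos _).le)]

theorem lintegral_exp_neg_mul_sub_Ioi {σ : ℝ} (hσ : 0 < σ) (c : ℝ) :
    ∫⁻ t in Ioi c, ENNReal.ofReal (rexp (-σ * (t - c))) = ENNReal.ofReal (1 / σ) := by
  have h : ∫ t in Ioi c, rexp (-σ * (t - c)) = 1 / σ := by
    simp_rw [mul_sub, sub_eq_add_neg, Real.exp_add]
    rw [integral_mul_const, integral_exp_mul_Ioi (by linarith), neg_div_neg_eq,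
      div_mul_eq_mul_div, ← Real.exp_add]
    simp
  rw [← h, ofReal_integral_eq_lintegral_ofReal
    (Integrable.of_integral_ne_zero (by rw [h]; positivity)) (ae_of_all _ fun t => (exp_pos _).le)]

theorem Complex.enorm_exp_neg_mul_ofReal (ω : ℂ) (t : ℝ) :
    ‖cexp (-ω * t)‖ₑ = ENNReal.ofReal (rexp (-ω.re * t)) := by
  rw [← ofReal_norm, Complex.norm_exp]
  simp

noncomputable def freeKernel (ω : ℂ) (x ξ : ℝ) : ℂ := cexp (-ω * |x - ξ|)

noncomputable def imageKernel (ω : ℂ) (a x ξ : ℝ) : ℂ := cexp (-ω * (x - a)) * cexp (-ω * (ξ - a))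

theorem continuous_uncurry_freeKernel (ω : ℂ) : Continuous (Function.uncurry (freeKernel ω)) := by
  unfold freeKernel Function.uncurry
  fun_prop

theorem continuous_uncurry_imageKernel (ω : ℂ) (a : ℝ) :
    Continuous (Function.uncurry (imageKernel ω a)) := by
  unfold imageKernel Function.uncurry
  fun_prop

theorem lintegral_enorm_freeKernel_le {ω : ℂ} (hω : 0 < ω.re) (s : Set ℝ) (x : ℝ) :
    ∫⁻ ξ in s, ‖freeKernel ω x ξ‖ₑ ≤ ENNReal.ofReal (2 / ω.re) :=
  calc ∫⁻ ξ in s, ‖freeKernel ω x ξ‖ₑ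
      ≤ ∫⁻ ξ, ENNReal.ofReal (rexp (-ω.re * |x - ξ|)) := by
        simpa only [freeKernel, Complex.enorm_exp_neg_mul_ofReal]
          using setLIntegral_le_lintegral s _
    _ = ENNReal.ofReal (2 / ω.re) := by
        rw [lintegral_sub_left_eq_self (fun t => ENNReal.ofReal (rexp (-ω.re * |t|))) x,
          lintegral_exp_neg_mul_abs hω]

theorem lintegral_enorm_imageKernel_le {ω : ℂ} (hω : 0 < ω.re) {a x : ℝ} (hx : a ≤ x) :
    ∫⁻ ξ in Ioi a, ‖imageKernel ω a x ξ‖ₑ ≤ ENNReal.ofReal (1 / ω.re) := by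
  have hdecay : ENNReal.ofReal (rexp (-ω.re * (x - a))) ≤ 1 :=
    ENNReal.ofReal_le_one.2 (Real.exp_le_one_iff.2 (by nlinarith))
  simp only [imageKernel, enorm_mul, ← ofReal_sub, Complex.enorm_exp_neg_mul_ofReal]
  rw [lintegral_const_mul' _ _ ENNReal.ofReal_ne_top, lintegral_exp_neg_mul_sub_Ioi hω]
  exact mul_le_of_le_one_left' hdecay

theorem schurBounded_freeKernel {ω : ℂ} (hω : 0 < ω.re) (a : ℝ) :
    SchurBounded (freeKernel ω) (volume.restrict (Ioi a)) (volume.restrict (Ioi a))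
      (2 / ω.re).toNNReal :=
  schurBounded_of_comm (fun x ξ => by rw [freeKernel, freeKernel, abs_sub_comm])
    (ae_of_all _ (lintegral_enorm_freeKernel_le hω _))

theorem schurBounded_imageKernel {ω : ℂ} (hω : 0 < ω.re) (a : ℝ) :
    SchurBounded (imageKernel ω a) (volume.restrict (Ioi a)) (volume.restrict (Ioi a))
      (1 / ω.re).toNNReal :=
  schurBounded_of_comm (fun _ _ => mul_comm _ _)
    (ae_restrict_of_forall_mem measurableSet_Ioi fun _ hx =>
      lintegral_enorm_imageKernel_le hω (le_of_lt hx))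

theorem Rplus_eq_sub_integral_kernel {ω : ℂ} {a x : ℝ} {φ : ℝ → ℂ} (hx : a < x)
    (hint : IntegrableOn (fun ξ => freeKernel ω x ξ * φ ξ) (Ioi a)) :
    Rplus ω a φ x = 1 / (2 * ω) * ((∫ ξ in Ioi a, freeKernel ω x ξ * φ ξ) -
      ∫ ξ in Ioi a, imageKernel ω a x ξ * φ ξ) := by
  have hleft : (∫ ξ in Ioc a x, cexp (ω * ξ) * φ ξ) * cexp (-ω * x) =
      ∫ ξ in Ioc a x, freeKernel ω x ξ * φ ξ := by
    rw [← integral_mul_const]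
    refine setIntegral_congr_fun measurableSet_Ioc fun ξ hξ => ?_
    rw [freeKernel, abs_of_nonneg (sub_nonneg.2 hξ.2),
      show -ω * ((x - ξ : ℝ) : ℂ) = ω * ξ + -ω * x by push_cast; ring, Complex.exp_add]
    ring
  have hright : (∫ ξ in Ioi x, cexp (-ω * ξ) * φ ξ) * cexp (ω * x) =
      ∫ ξ in Ioi x, freeKernel ω x ξ * φ ξ := by
    rw [← integral_mul_const]
    refine setIntegral_congr_fun measurableSet_Ioi fun ξ hξ => ?_
    rw [freeKernel, abs_of_nonpos (sub_nonpos.2 (le_of_lt hξ)),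
      show -ω * ((-(x - ξ) : ℝ) : ℂ) = -ω * ξ + ω * x by push_cast; ring, Complex.exp_add]
    ring
  have himage : (∫ ξ in Ioi a, cexp (-ω * ξ) * φ ξ) * cexp (2 * ω * a) * cexp (-ω * x) =
      ∫ ξ in Ioi a, imageKernel ω a x ξ * φ ξ := by
    rw [mul_assoc, ← integral_mul_const]
    refine integral_congr_ae (ae_of_all _ fun ξ => ?_)
    simp only [imageKernel, ← Complex.exp_add]
    rw [mul_right_comm, ← Complex.exp_add]
    ring_nf
  have hsplit : ∫ ξ in Ioi a, freeKernel ω x ξ * φ ξ =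
      (∫ ξ in Ioc a x, freeKernel ω x ξ * φ ξ) + ∫ ξ in Ioi x, freeKernel ω x ξ * φ ξ := by
    rw [← setIntegral_union (Ioc_disjoint_Ioi le_rfl) measurableSet_Ioi
      (hint.mono_set Ioc_subset_Ioi_self) (hint.mono_set (Ioi_subset_Ioi hx.le)),
      Ioc_union_Ioi_eq_Ioi hx.le]
  rw [Rplus, hsplit, ← hleft, ← hright, ← himage]
  ring

theorem Rplus_ae_eq_sub_integral_kernel {ω : ℂ} (hω : 0 < ω.re) {a : ℝ} {φ : ℝ → ℂ}
    (hφ : MemLp φ 2 (volume.restrict (Ioi a))) :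
    Rplus ω a φ =ᵐ[volume.restrict (Ioi a)] fun x => 1 / (2 * ω) *
      ((∫ ξ in Ioi a, freeKernel ω x ξ * φ ξ) - ∫ ξ in Ioi a, imageKernel ω a x ξ * φ ξ) := by
  filter_upwards [ae_restrict_mem measurableSet_Ioi, ae_integrable_kernel_mul
    (continuous_uncurry_freeKernel ω).aestronglyMeasurable hφ (schurBounded_freeKernel hω a)]
    with x hx hint
  exact Rplus_eq_sub_integral_kernel hx hint

theorem stmt_12_general (ω : ℂ) (hω : 0 < ω.re) (a : ℝ) (φ : ℝ → ℂ)
    (hφ : MemLp φ 2 (volume.restrict (Ioi a))) :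
    MemLp (Rplus ω a φ) 2 (volume.restrict (Ioi a)) ∧
      eLpNorm (Rplus ω a φ) 2 (volume.restrict (Ioi a)) ≤
        ENNReal.ofReal (3 / (2 * ‖ω‖ * ω.re)) *
          eLpNorm φ 2 (volume.restrict (Ioi a)) := by
  set μ := volume.restrict (Ioi a)
  have hfree := (continuous_uncurry_freeKernel ω).aestronglyMeasurable (μ := μ.prod μ)
  have himage := (continuous_uncurry_imageKernel ω a).aestronglyMeasurable (μ := μ.prod μ)
  have hT₁ := memLp_integral_kernel_mul hfree hφ (schurBounded_freeKernel hω a)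
  have hT₂ := memLp_integral_kernel_mul himage hφ (schurBounded_imageKernel hω a)
  have hR := Rplus_ae_eq_sub_integral_kernel hω hφ
  have hconst : ‖1 / (2 * ω)‖ₑ * (ENNReal.ofReal (2 / ω.re) + ENNReal.ofReal (1 / ω.re)) =
      ENNReal.ofReal (3 / (2 * ‖ω‖ * ω.re)) := by
    have hω₀ : ω ≠ 0 := fun h => by simp [h] at hω
    rw [← ENNReal.ofReal_add (by positivity) (by positivity), ← ofReal_norm,
      ← ENNReal.ofReal_mul (norm_nonneg _), norm_div, norm_one, norm_mul, Complex.norm_two]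
    congr 1
    field_simp
    ring
  refine ⟨((hT₁.sub hT₂).const_mul _).ae_eq hR.symm, ?_⟩
  rw [eLpNorm_congr_ae hR, ← hconst, mul_assoc, add_mul]
  refine (eLpNorm_const_smul (1 / (2 * ω)) _ 2 μ).trans_le ?_
  gcongr
  exact (eLpNorm_sub_le hT₁.1 hT₂.1 one_le_two).trans (add_le_add
    (eLpNorm_integral_kernel_mul_le hfree hφ (schurBounded_freeKernel hω a))
    (eLpNorm_integral_kernel_mul_le himage hφ (schurBounded_imageKernel hω a)))

theorem stmt_12 (ω : ℂ) (hω : 0 < ω.re) (a : ℝ) (ha : 0 < a) (φ : ℝ → ℂ)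
    (hφ : MemLp φ 2 (volume.restrict (Ioi a))) :
    MemLp (Rplus ω a φ) 2 (volume.restrict (Ioi a)) ∧
      eLpNorm (Rplus ω a φ) 2 (volume.restrict (Ioi a)) ≤
        ENNReal.ofReal (3 / (2 * ‖ω‖ * ω.re)) *
          eLpNorm φ 2 (volume.restrict (Ioi a)) :=
  stmt_12_general ω hω a φ hφ
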